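/- arXiv:1707.00846 — 9 statements merged into one kernel-verified Lean document; each statement's English description precedes it below -/
import Mathlib

section
/- Let a, b ∈ ℝ with a² < b², ω = √(b²−a²), and u(t) = α(cosh(ωt) − ((a+b)/ω) sinh(ωt)) for some α ∈ ℝ. Then u satisfies u'(t) + a·u(−t) + b·u(t) = 0 for all t ∈ ℝ. -/
open Real

/-! Differentiating, the `cosh` terms cancel and `u' + a u(-·) + b u` reduces to
`α ((ω² + a² - b²) / ω) sinh (ω t)`, which vanishes because `ω² = b² - a²`. -/

theorem hasDerivAt_cosh_sub_mul_sinh (ω c t : ℝ) :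
    HasDerivAt (fun t => cosh (ω * t) - c * sinh (ω * t))
      (ω * sinh (ω * t) - c * ω * cosh (ω * t)) t := by
  have hlin : HasDerivAt (fun t : ℝ => ω * t) ω t := by
    simpa using (hasDerivAt_id t).const_mul ω
  have hcosh := (hasDerivAt_cosh (ω * t)).comp t hlin
  have hsinh := (hasDerivAt_sinh (ω * t)).comp t hlin
  exact (hcosh.sub (hsinh.const_mul c)).congr_deriv (by ring)

theorem cosh_sub_mul_sinh_solves_reflection_eq {a b ω : ℝ} (hω0 : ω ≠ 0)
    (hω : ω ^ 2 = b ^ 2 - a ^ 2) (α t : ℝ) :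
    let u := fun t => α * (cosh (ω * t) - (a + b) / ω * sinh (ω * t))
    deriv u t + a * u (-t) + b * u t = 0 := by
  intro u
  have hderiv := ((hasDerivAt_cosh_sub_mul_sinh ω ((a + b) / ω) t).const_mul α).deriv
  simp only [u, hderiv, mul_neg, cosh_neg, sinh_neg]
  have hc : (a + b) / ω * ω = a + b := div_mul_cancel₀ _ hω0
  have hcs : (a + b) / ω * (a - b) = -ω := by
    field_simp
    linear_combination hω
  linear_combination α * sinh (ω * t) * hcs - α * cosh (ω * t) * hc

theorem reflection_eq_solution_C2 (a b : ℝ) (h : a^2 < b^2) (α : ℝ)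
    (ω : ℝ) (hω : ω = Real.sqrt (b^2 - a^2))
    (u : ℝ → ℝ)
    (hu : ∀ t, u t = α * (Real.cosh (ω * t) - ((a + b) / ω) * Real.sinh (ω * t))) :
    ∀ t : ℝ, deriv u t + a * u (-t) + b * u t = 0 := by
  have hpos : 0 < b ^ 2 - a ^ 2 := sub_pos.mpr h
  have hω0 : ω ≠ 0 := hω ▸ (sqrt_pos.mpr hpos).ne'
  have hω2 : ω ^ 2 = b ^ 2 - a ^ 2 := hω ▸ sq_sqrt hpos.le
  obtain rfl : u = _ := funext hu
  exact cosh_sub_mul_sinh_solves_reflection_eq hω0 hω2 α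
end

section
/- Let a, b ∈ ℝ, and let ũ, ṽ : ℝ → ℝ be the unique solutions of ũ'(t) + a ũ(−t) + b ũ(t) = 0, ũ(0) = 1 and ṽ'(t) − a ṽ(−t) + b ṽ(t) = 0, ṽ(0) = 1, among the families given by: if a² > b², ũ(t) = cos(ωt) − ((a+b)/ω) sin(ωt) and ṽ(t) = cos(ωt) + ((a−b)/ω) sin(ωt) with ω = √(a²−b²); if a² < b², the hyperbolic analogues; if a = b, ũ(t) = 1 − 2at and ṽ(t) = 1; if a = −b, ũ(t) = 1 and ṽ(t) = 1 + 2at. Then the even parts satisfy ũ_e ≡ ṽ_e on ℝ. -/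
/-- The normalized solution of `u'(t) + a u(-t) + b u(t) = 0`, `u(0) = 1`,
given by explicit trigonometric, hyperbolic or linear formulas depending
on the sign of `a² - b²`. -/
noncomputable def utilde (a b : ℝ) : ℝ → ℝ := fun t =>
  if a^2 > b^2 then
    Real.cos (Real.sqrt (a^2 - b^2) * t) -
      ((a + b) / Real.sqrt (a^2 - b^2)) * Real.sin (Real.sqrt (a^2 - b^2) * t)
  else if a^2 < b^2 then
    Real.cosh (Real.sqrt (b^2 - a^2) * t) -
      ((a + b) / Real.sqrt (b^2 - a^2)) * Real.sinh (Real.sqrt (b^2 - a^2) * t)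
  else if a = b then 1 - 2 * a * t
  else 1

/-- The normalized solution of `v'(t) - a v(-t) + b v(t) = 0`, `v(0) = 1`. -/
noncomputable def vtilde (a b : ℝ) : ℝ → ℝ := utilde (-a) b

/-- Even part of a function. -/
noncomputable def evenPart (f : ℝ → ℝ) : ℝ → ℝ := fun t => (f t + f (-t)) / 2

/-- Odd part of a function. -/
noncomputable def oddPart (f : ℝ → ℝ) : ℝ → ℝ := fun t => (f t - f (-t)) / 2

theorem evenPart_utilde_eq_evenPart_vtilde (a b : ℝ) :
    ∀ t : ℝ, evenPart (utilde a b) t = evenPart (vtilde a b) t := by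
  intro t
  unfold evenPart vtilde utilde
  simp only [neg_sq, mul_neg, Real.cos_neg, Real.sin_neg, Real.cosh_neg, Real.sinh_neg]
  by_cases h1 : a^2 > b^2
  · simp [h1]
  · by_cases h2 : a^2 < b^2
    · simp [h1, h2]
    · by_cases h3 : a = b
      · subst h3
        by_cases h4 : -a = a
        · have hb : a = 0 := by linarith
          simp [h1, h2, hb]
        · simp [h1, h2, h4]
      · by_cases h4 : -a = b
        · simp [h1, h2, h3, h4]
        · simp [h1, h2, h3, h4]
end

section
/- With ũ, ṽ as the normalized solutions of ũ'(t) + a ũ(−t) + b ũ(t) = 0, ũ(0) = 1 and ṽ'(t) − a ṽ(−t) + b ṽ(t) = 0, ṽ(0) = 1 (given by the explicit trigonometric, hyperbolic, or linear formulas according to the sign of a² − b²), one has ũ_e(t) ṽ_e(t) − ũ_o(t) ṽ_o(t) = 1 for all t ∈ ℝ. -/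
theorem evenodd_identity (a b : ℝ) :
    ∀ t : ℝ,
      evenPart (utilde a b) t * evenPart (vtilde a b) t -
        oddPart (utilde a b) t * oddPart (vtilde a b) t = 1 := by
  intro t
  simp only [evenPart, oddPart, vtilde, utilde, show (-a:ℝ)^2 = a^2 from by ring]
  rcases lt_trichotomy (b^2) (a^2) with h | h | h
  · -- trig case
    simp only [if_pos h, not_lt.mpr h.le, if_neg (by linarith : ¬ a^2 < b^2)]
    set ω := Real.sqrt (a^2 - b^2) with hωdef
    have hω2 : ω^2 = a^2 - b^2 := Real.sq_sqrt (by linarith)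
    have hω : ω ≠ 0 := by
      intro h0
      rw [h0] at hω2; simp at hω2; linarith
    have key := Real.sin_sq_add_cos_sq (ω * t)
    simp only [mul_neg, Real.cos_neg, Real.sin_neg]
    field_simp
    nlinarith [key, sq_nonneg (Real.sin (ω*t)), sq_nonneg (Real.cos (ω*t))]
  · -- equal squares case
    simp only [if_neg (by linarith : ¬ a^2 > b^2), if_neg (by linarith : ¬ a^2 < b^2)]
    rcases eq_or_ne a b with hab | hab
    · simp only [if_pos hab]
      rcases eq_or_ne (-a) b with hnab | hnab
      · have ha : a = 0 := by linarith
        simp [ha, hnab]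
      · simp only [if_neg hnab]
        ring
    · simp only [if_neg hab]
      have hnab : -a = b := by
        have : (a-b)*(a+b) = 0 := by nlinarith
        rcases mul_eq_zero.mp this with h1 | h1
        · exact absurd (by linarith) hab
        · linarith
      simp only [if_pos hnab]
      ring
  · -- hyperbolic case
    simp only [if_neg (by linarith : ¬ a^2 > b^2), if_pos h]
    set ω := Real.sqrt (b^2 - a^2) with hωdef
    have hω2 : ω^2 = b^2 - a^2 := Real.sq_sqrt (by linarith)
    have hω : ω ≠ 0 := by
      intro h0
      rw [h0] at hω2; simp at hω2; linarith
    have key := Real.cosh_sq_sub_sinh_sq (ω * t)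
    simp only [mul_neg, Real.cosh_neg, Real.sinh_neg]
    field_simp
    nlinarith [key]
end

section
/- With ũ, ṽ the normalized solutions as above, for all s ∈ ℝ one has ũ(s) ṽ(−s) + ũ(−s) ṽ(s) = 2. -/
theorem utilde_vtilde_sum_eq_two (a b : ℝ) :
    ∀ s : ℝ,
      utilde a b s * vtilde a b (-s) + utilde a b (-s) * vtilde a b s = 2 := by
  intro s
  simp only [utilde, vtilde, neg_sq, neg_neg]
  split_ifs with h1 h2 h3 h4 h4
  · -- trigonometric case
    set w := Real.sqrt (a^2 - b^2) with hw
    have hw2 : w^2 = a^2 - b^2 := Real.sq_sqrt (by linarith)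
    have hwpos : 0 < w := Real.sqrt_pos.mpr (by linarith)
    have hwne : w ≠ 0 := ne_of_gt hwpos
    rw [mul_neg, Real.cos_neg, Real.sin_neg]
    have hpy := Real.sin_sq_add_cos_sq (w * s)
    field_simp
    nlinarith [hpy, hw2, sq_nonneg (Real.sin (w*s)), sq_nonneg (Real.cos (w*s))]
  · -- hyperbolic case
    set w := Real.sqrt (b^2 - a^2) with hw
    have hw2 : w^2 = b^2 - a^2 := Real.sq_sqrt (by linarith)
    have hwpos : 0 < w := Real.sqrt_pos.mpr (by linarith)
    have hwne : w ≠ 0 := ne_of_gt hwpos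
    rw [mul_neg, Real.cosh_neg, Real.sinh_neg]
    have hpy := Real.cosh_sq (w * s)
    field_simp
    nlinarith [hpy, hw2]
  · -- a = b and -a = b
    have ha : a = 0 := by linarith
    have hb : b = 0 := by linarith
    subst ha; subst hb
    norm_num
  · ring
  · ring
  · norm_num
end

section
/- With ũ, ṽ the normalized solutions as above, for all t, s ∈ ℝ: ũ_e(s) ṽ_e(t) = ũ_e(t) ṽ_e(s) and ũ_o(s) ṽ_o(t) = ũ_o(t) ṽ_o(s). -/
lemma key_sym (E S : ℝ → ℝ) (c d : ℝ) (u v : ℝ → ℝ)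
    (hu : ∀ t, u t = E t + c * S t) (hv : ∀ t, v t = E t + d * S t)
    (hE : ∀ t, E (-t) = E t) (hS : ∀ t, S (-t) = - S t) :
    ∀ t s : ℝ,
      evenPart u s * evenPart v t = evenPart u t * evenPart v s ∧
      oddPart u s * oddPart v t = oddPart u t * oddPart v s := by
  intro t s
  have eu : ∀ r, evenPart u r = E r := fun r => by
    simp only [evenPart, hu, hE, hS]; ring
  have ev : ∀ r, evenPart v r = E r := fun r => by
    simp only [evenPart, hv, hE, hS]; ring
  have ou : ∀ r, oddPart u r = c * S r := fun r => by
    simp only [oddPart, hu, hE, hS]; ring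
  have ov : ∀ r, oddPart v r = d * S r := fun r => by
    simp only [oddPart, hv, hE, hS]; ring
  rw [eu, eu, ev, ev, ou, ou, ov, ov]
  constructor <;> ring

lemma utilde_of_gt {a b : ℝ} (h : a^2 > b^2) : ∀ t, utilde a b t =
    Real.cos (Real.sqrt (a^2 - b^2) * t) +
      (-((a + b) / Real.sqrt (a^2 - b^2))) * Real.sin (Real.sqrt (a^2 - b^2) * t) := by
  intro t; simp only [utilde, if_pos h]; ring

lemma utilde_of_lt {a b : ℝ} (h : a^2 < b^2) : ∀ t, utilde a b t =
    Real.cosh (Real.sqrt (b^2 - a^2) * t) +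
      (-((a + b) / Real.sqrt (b^2 - a^2))) * Real.sinh (Real.sqrt (b^2 - a^2) * t) := by
  intro t; simp only [utilde, if_neg (by linarith : ¬ a^2 > b^2), if_pos h]; ring

lemma utilde_of_eq {a b : ℝ} (h : a = b) : ∀ t, utilde a b t = 1 + (-2*a) * t := by
  intro t
  simp only [utilde, if_neg (show ¬ a^2 > b^2 by rw [h]; exact lt_irrefl _),
    if_neg (show ¬ a^2 < b^2 by rw [h]; exact lt_irrefl _), if_pos h]
  ring

lemma utilde_of_ne {a b : ℝ} (h2 : a^2 = b^2) (h : a ≠ b) : ∀ t, utilde a b t = 1 + 0 * t := by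
  intro t
  simp only [utilde, if_neg (show ¬ a^2 > b^2 by rw [h2]; exact lt_irrefl _),
    if_neg (show ¬ a^2 < b^2 by rw [h2]; exact lt_irrefl _), if_neg h]
  ring

theorem evenodd_symmetry (a b : ℝ) :
    ∀ t s : ℝ,
      evenPart (utilde a b) s * evenPart (vtilde a b) t =
        evenPart (utilde a b) t * evenPart (vtilde a b) s ∧
      oddPart (utilde a b) s * oddPart (vtilde a b) t =
        oddPart (utilde a b) t * oddPart (vtilde a b) s := by
  intro t s
  have hna : (-a)^2 = a^2 := by ring
  unfold vtilde
  rcases lt_trichotomy (a^2) (b^2) with h | h | h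
  · refine key_sym (fun r => Real.cosh (Real.sqrt (b^2 - a^2) * r))
      (fun r => Real.sinh (Real.sqrt (b^2 - a^2) * r))
      (-((a + b) / Real.sqrt (b^2 - a^2))) (-((-a + b) / Real.sqrt (b^2 - a^2))) _ _
      (utilde_of_lt h) (fun r => ?_)
      (fun r => by simp [mul_neg]) (fun r => by simp [mul_neg]) t s
    rw [utilde_of_lt (show (-a)^2 < b^2 by rwa [hna]),
      show b^2 - (-a)^2 = b^2 - a^2 from by ring]
  · by_cases hab : a = b
    · by_cases h0 : a = 0
      · exact key_sym (fun _ => 1) (fun r => r) (-2*a) (-2*(-a)) _ _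
          (utilde_of_eq hab) (utilde_of_eq (by rw [h0, ← hab, h0]; ring))
          (fun r => rfl) (fun r => rfl) t s
      · exact key_sym (fun _ => 1) (fun r => r) (-2*a) 0 _ _
          (utilde_of_eq hab) (utilde_of_ne (hna ▸ h) (fun hc => h0 (by linarith)))
          (fun r => rfl) (fun r => rfl) t s
    · have hab' : a = -b := by
        have : (a - b) * (a + b) = 0 := by nlinarith
        rcases mul_eq_zero.mp this with h1 | h1
        · exact absurd (by linarith) hab
        · linarith
      exact key_sym (fun _ => 1) (fun r => r) 0 (-2*(-a)) _ _
        (utilde_of_ne h hab) (utilde_of_eq (by linarith))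
        (fun r => rfl) (fun r => rfl) t s
  · refine key_sym (fun r => Real.cos (Real.sqrt (a^2 - b^2) * r))
      (fun r => Real.sin (Real.sqrt (a^2 - b^2) * r))
      (-((a + b) / Real.sqrt (a^2 - b^2))) (-((-a + b) / Real.sqrt (a^2 - b^2))) _ _
      (utilde_of_gt h) (fun r => ?_)
      (fun r => by simp [mul_neg]) (fun r => by simp [mul_neg]) t s
    rw [utilde_of_gt (show (-a)^2 > b^2 by rwa [hna]),
      show (-a)^2 - b^2 = a^2 - b^2 from by ring]
end

section
/- Let a, b, c, t₀ ∈ ℝ and h : ℝ → ℝ continuous. Let ũ be the normalized solution of ũ'(t) + a ũ(−t) + b ũ(t) = 0, ũ(0) = 1. If ũ(t₀) = 0 and w is a solution of w'(t) + a w(−t) + b w(t) = h(t) with w(t₀) = c, then for every λ ∈ ℝ, w + λũ is also a solution of the same initial value problem; in particular the problem does not have a unique solution. -/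
theorem hasDerivAt_cos_sub_sin {a b ω : ℝ} (hω : ω ≠ 0) (hω2 : ω ^ 2 = a ^ 2 - b ^ 2) (t : ℝ) :
    let f := fun t => Real.cos (ω * t) - (a + b) / ω * Real.sin (ω * t)
    HasDerivAt f (-(a * f (-t)) - b * f t) t := by
  intro f
  have hlin : HasDerivAt (ω * ·) ω t := by simpa using (hasDerivAt_id t).const_mul ω
  refine (hlin.cos.sub (hlin.sin.const_mul ((a + b) / ω))).congr_deriv ?_
  simp only [f, mul_neg, Real.cos_neg, Real.sin_neg]
  field_simp
  linear_combination (-Real.sin (ω * t)) * hω2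

theorem hasDerivAt_cosh_sub_sinh {a b μ : ℝ} (hμ : μ ≠ 0) (hμ2 : μ ^ 2 = b ^ 2 - a ^ 2) (t : ℝ) :
    let f := fun t => Real.cosh (μ * t) - (a + b) / μ * Real.sinh (μ * t)
    HasDerivAt f (-(a * f (-t)) - b * f t) t := by
  intro f
  have hlin : HasDerivAt (μ * ·) μ t := by simpa using (hasDerivAt_id t).const_mul μ
  refine (hlin.cosh.sub (hlin.sinh.const_mul ((a + b) / μ))).congr_deriv ?_
  simp only [f, mul_neg, Real.cosh_neg, Real.sinh_neg]
  field_simp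
  linear_combination Real.sinh (μ * t) * hμ2

theorem utilde_zero (a b : ℝ) : utilde a b 0 = 1 := by
  unfold utilde; split_ifs <;> simp

theorem hasDerivAt_utilde (a b t : ℝ) :
    HasDerivAt (utilde a b) (-(a * utilde a b (-t)) - b * utilde a b t) t := by
  unfold utilde
  split_ifs with hgt hlt hab
  · exact hasDerivAt_cos_sub_sin (Real.sqrt_pos.mpr (by linarith)).ne'
      (Real.sq_sqrt (by linarith)) t
  · exact hasDerivAt_cosh_sub_sinh (Real.sqrt_pos.mpr (by linarith)).ne'
      (Real.sq_sqrt (by linarith)) t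
  · subst hab
    exact (((hasDerivAt_id t).const_mul (2 * a)).const_sub 1).congr_deriv (by ring)
  · have hsum : a + b = 0 := by
      have : (a - b) * (a + b) = 0 := by nlinarith
      exact (mul_eq_zero.mp this).resolve_left (sub_ne_zero.mpr hab)
    exact (hasDerivAt_const t 1).congr_deriv (by linear_combination hsum)

theorem differentiable_utilde (a b : ℝ) : Differentiable ℝ (utilde a b) :=
  fun t => (hasDerivAt_utilde a b t).differentiableAt

theorem deriv_add_const_mul_of_homogeneous {a b : ℝ} {w u h : ℝ → ℝ} (hw : Differentiable ℝ w)
    (hweq : ∀ t, deriv w t + a * w (-t) + b * w t = h t)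
    (hu : ∀ t, HasDerivAt u (-(a * u (-t)) - b * u t) t) (l t : ℝ) :
    deriv (fun t => w t + l * u t) t + a * (w (-t) + l * u (-t)) + b * (w t + l * u t) = h t := by
  have hderiv : HasDerivAt (fun t => w t + l * u t)
      (deriv w t + l * (-(a * u (-t)) - b * u t)) t :=
    (hw t).hasDerivAt.add ((hu t).const_mul l)
  rw [hderiv.deriv]
  linear_combination hweq t

theorem nonuniqueness_when_utilde_vanishes_general (a b c t₀ : ℝ) (h : ℝ → ℝ)
    (h₀ : utilde a b t₀ = 0)
    (w : ℝ → ℝ) (hw : Differentiable ℝ w)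
    (hweq : ∀ t : ℝ, deriv w t + a * w (-t) + b * w t = h t)
    (hwc : w t₀ = c) :
    (∀ l : ℝ,
      (∀ t : ℝ,
        deriv (fun t => w t + l * utilde a b t) t +
          a * (w (-t) + l * utilde a b (-t)) + b * (w t + l * utilde a b t) = h t) ∧
      w t₀ + l * utilde a b t₀ = c) ∧
    ∃ w₂ : ℝ → ℝ, w₂ ≠ w ∧ Differentiable ℝ w₂ ∧
      (∀ t : ℝ, deriv w₂ t + a * w₂ (-t) + b * w₂ t = h t) ∧ w₂ t₀ = c := by
  have hsol (l : ℝ) :=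
    deriv_add_const_mul_of_homogeneous hw hweq (hasDerivAt_utilde a b) l
  have hinit (l : ℝ) : w t₀ + l * utilde a b t₀ = c := by rw [h₀, hwc]; ring
  refine ⟨fun l => ⟨hsol l, hinit l⟩, fun t => w t + 1 * utilde a b t, ?_,
    hw.add ((differentiable_utilde a b).const_mul 1), hsol 1, hinit 1⟩
  intro heq
  simpa [utilde_zero] using congrFun heq 0

theorem nonuniqueness_when_utilde_vanishes (a b c t₀ : ℝ) (h : ℝ → ℝ)
    (hh : Continuous h) (h₀ : utilde a b t₀ = 0)
    (w : ℝ → ℝ) (hw : Differentiable ℝ w)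
    (hweq : ∀ t : ℝ, deriv w t + a * w (-t) + b * w t = h t)
    (hwc : w t₀ = c) :
    (∀ l : ℝ,
      (∀ t : ℝ,
        deriv (fun t => w t + l * utilde a b t) t +
          a * (w (-t) + l * utilde a b (-t)) + b * (w t + l * utilde a b t) = h t) ∧
      w t₀ + l * utilde a b t₀ = c) ∧
    ∃ w₂ : ℝ → ℝ, w₂ ≠ w ∧ Differentiable ℝ w₂ ∧
      (∀ t : ℝ, deriv w₂ t + a * w₂ (-t) + b * w₂ t = h t) ∧ w₂ t₀ = c :=
  nonuniqueness_when_utilde_vanishes_general a b c t₀ h h₀ w hw hweq hwc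
end

section
/- Let a ∈ ℝ, a ≠ 0, and define G(t,s) on ℝ² by: G(t,s) = 1 + a(s−t) if 0 ≤ s ≤ t; G(t,s) = −1 − a(s−t) if t ≤ s ≤ 0; G(t,s) = a(s+t) if −t ≤ s ≤ 0; G(t,s) = −a(s+t) if 0 ≤ s ≤ −t; and 0 otherwise. If a > 0, then G(t,s) ≥ 0 for all (t,s) ∈ [0, 1/a] × ℝ. -/
/-- Green's function of `u'(t) + a u(-t) + a u(t) = h(t)`, `u(0) = 0` (case a = b). -/
noncomputable def GreenC31 (a t s : ℝ) : ℝ :=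
  if 0 ≤ s ∧ s ≤ t then 1 + a * (s - t)
  else if t ≤ s ∧ s ≤ 0 then -1 - a * (s - t)
  else if -t ≤ s ∧ s ≤ 0 then a * (s + t)
  else if 0 ≤ s ∧ s ≤ -t then -a * (s + t)
  else 0

theorem GreenC31_nonneg (a : ℝ) (ha0 : a ≠ 0) (ha : a > 0) :
    ∀ t s : ℝ, 0 ≤ t → t ≤ 1 / a → GreenC31 a t s ≥ 0 := by
  intro t s ht ht1
  have h1 : a * t ≤ 1 := by
    rw [le_div_iff₀ ha] at ht1; linarith [mul_comm a t]
  unfold GreenC31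
  split_ifs with h1' h2 h3 h4
  · nlinarith [h1'.1, h1'.2]
  · exact absurd ⟨ht.trans h2.1, h2.2.trans ht⟩ h1'
  · nlinarith [h3.1]
  · nlinarith [h4.1, h4.2]
  · linarith
end

section
/- Let a ∈ ℝ, a > 0, and define G(t,s) on ℝ² by: G(t,s) = 1 + a(t−s) if 0 ≤ s ≤ t; G(t,s) = −1 − a(t−s) if t ≤ s ≤ 0; G(t,s) = a(s+t) if −t ≤ s ≤ 0; G(t,s) = −a(s+t) if 0 ≤ s ≤ −t; 0 otherwise. Then G(t,s) ≥ 0 for all (t,s) ∈ [0, ∞) × ℝ. -/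
/-- Green's function of `u'(t) + a u(-t) - a u(t) = h(t)`, `u(0) = 0` (case b = -a). -/
noncomputable def GreenC32 (a t s : ℝ) : ℝ :=
  if 0 ≤ s ∧ s ≤ t then 1 + a * (t - s)
  else if t ≤ s ∧ s ≤ 0 then -1 - a * (t - s)
  else if -t ≤ s ∧ s ≤ 0 then a * (s + t)
  else if 0 ≤ s ∧ s ≤ -t then -a * (s + t)
  else 0

theorem GreenC32_nonneg (a : ℝ) (ha : a > 0) :
    ∀ t s : ℝ, 0 ≤ t → GreenC32 a t s ≥ 0 := by
  intro t s ht
  unfold GreenC32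
  split_ifs with h1 h2 h3 h4
  · nlinarith [h1.1, h1.2]
  · have hs : s = 0 := le_antisymm h2.2 (ht.trans h2.1)
    have ht0 : t = 0 := le_antisymm (hs ▸ h2.1) ht
    exact absurd ⟨hs.ge, by rw [hs, ht0]⟩ h1
  · nlinarith [h3.1, h3.2]
  · push_neg at h1; nlinarith [h4.1, h4.2, h1 h4.1]
  · exact le_refl 0
end

section
/- Assume a² > b², a > 0 and b > 0. Let ω = √(a² − b²) and η = (1/ω) arctan(ω/b). Define, for t ≥ 0, G(t,s) = cos(ω(s−t)) + (b/ω) sin(ω(s−t)) if 0 ≤ s ≤ t, G(t,s) = (a/ω) sin(ω(s+t)) if −t ≤ s ≤ 0, and G(t,s) = 0 otherwise. Then G(t,s) ≥ 0 for all (t,s) ∈ [0, η] × ℝ. -/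
/-!
For `0 ≤ s ≤ t`, write `cos x + (b/ω) sin x` as a positive multiple of `sin (x + arctan (ω/b))`;
with `x = ω(s − t) ∈ [−ωη, 0]` and `ωη = arctan (ω/b) < π/2`, the argument of the sine lies in
`[0, π/2)`. For `−t ≤ s ≤ 0` the argument `ω(s + t)` of the sine lies in `[0, ωη] ⊆ [0, π/2)`.
-/

open Real

theorem cos_add_mul_sin_eq {c : ℝ} (hc : c ≠ 0) (x : ℝ) :
    cos x + c * sin x = c * √(1 + c⁻¹ ^ 2) * sin (x + arctan c⁻¹) := by
  have hsqrt : √(1 + c⁻¹ ^ 2) ≠ 0 := (sqrt_pos.2 (by positivity)).ne'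
  rw [sin_add, sin_arctan, cos_arctan]
  field_simp
  ring

theorem cos_add_mul_sin_nonneg {c x : ℝ} (hc : 0 < c) (hx₀ : -arctan c⁻¹ ≤ x)
    (hx₁ : x ≤ π - arctan c⁻¹) : 0 ≤ cos x + c * sin x := by
  rw [cos_add_mul_sin_eq hc.ne']
  exact mul_nonneg (by positivity) (sin_nonneg_of_nonneg_of_le_pi (by linarith) (by linarith))

theorem GreenC1_nonneg (a b : ℝ) (h : a^2 > b^2) (ha : a > 0) (hb : b > 0)
    (ω η : ℝ) (hω : ω = Real.sqrt (a^2 - b^2)) (hη : η = (1 / ω) * Real.arctan (ω / b))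
    (G : ℝ → ℝ → ℝ)
    (hG : ∀ t s : ℝ, G t s =
      if 0 ≤ s ∧ s ≤ t then Real.cos (ω * (s - t)) + (b / ω) * Real.sin (ω * (s - t))
      else if -t ≤ s ∧ s ≤ 0 then (a / ω) * Real.sin (ω * (s + t))
      else 0) :
    ∀ t s : ℝ, 0 ≤ t → t ≤ η → G t s ≥ 0 := by
  intro t s ht htη
  have hω₀ : 0 < ω := hω ▸ sqrt_pos.2 (by linarith)
  have hωt : ω * t ≤ arctan (ω / b) := by
    calc ω * t ≤ ω * η := mul_le_mul_of_nonneg_left htη hω₀.le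
      _ = arctan (ω / b) := by rw [hη]; field_simp
  have hphase : arctan (ω / b) < π / 2 := arctan_lt_pi_div_two _
  rw [hG]
  split_ifs with hright hleft
  · apply cos_add_mul_sin_nonneg (div_pos hb hω₀) <;> rw [inv_div] <;> nlinarith
  · exact mul_nonneg (div_pos ha hω₀).le
      (sin_nonneg_of_nonneg_of_le_pi (by nlinarith) (by nlinarith))
  · exact le_rfl
end
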